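/- Every solution x : [t₀, ∞) → ℝⁿ of the masked average-consensus system is bounded: there exists M (depending on the solution) such that ‖x(t)‖ ≤ M for all t ≥ t₀. -/

import Mathlib

open Set Filter Topology Matrix

/-- Right-hand side of the masked average-consensus system
`ẋ = -L (I + Φ e^{-Σ t}) (x + e^{-Δ t} γ)`, written componentwise through the
diagonal matrices `Φ = diag φ`, `Σ = diag σ`, `Δ = diag δ`. -/
noncomputable def maskedConsensusRHS {n : ℕ} (L : Matrix (Fin n) (Fin n) ℝ)
    (φ σ δ γ : Fin n → ℝ) (t : ℝ) (x : Fin n → ℝ) : Fin n → ℝ :=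
  -(L.mulVec (fun i => (1 + φ i * Real.exp (-σ i * t)) * (x i + Real.exp (-δ i * t) * γ i)))

/-!
Because `Lᵀ𝟙 = 0`, the sum of the coordinates of `x` is conserved, so `w = x - η𝟙` stays
orthogonal to `𝟙` when `η` is the initial average. Since `L𝟙 = 0`, the energy `U = 1 + ‖w‖²`
satisfies `U' = -2 wᵀLw - 2 wᵀLm`, where `m = (I + Φe^{-Σt})(x + e^{-Δt}γ) - x` is the
perturbation caused by the masks. The first term is nonpositive because `L + Lᵀ` is positive
on `𝟙^⊥`, and `m` is at most linear in `w` with exponentially decaying coefficients, so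
`U' ≤ a(t) U` with `a` a nonnegative combination of decaying exponentials. Such an `a` has a
bounded primitive, and Grönwall's inequality bounds `U`, hence `x`.
-/

open Real

def HasNonposPrimitive (a : ℝ → ℝ) : Prop :=
  ∃ A : ℝ → ℝ, (∀ t, HasDerivAt A (a t) t) ∧ ∀ t, A t ≤ 0

namespace HasNonposPrimitive

theorem zero : HasNonposPrimitive 0 :=
  ⟨0, fun _ => hasDerivAt_const _ _, fun _ => le_rfl⟩

theorem add {a b : ℝ → ℝ} (ha : HasNonposPrimitive a) (hb : HasNonposPrimitive b) :
    HasNonposPrimitive fun t => a t + b t := by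
  obtain ⟨A, hA, hA0⟩ := ha
  obtain ⟨B, hB, hB0⟩ := hb
  exact ⟨A + B, fun t => (hA t).add (hB t), fun t => add_nonpos (hA0 t) (hB0 t)⟩

theorem const_mul {a : ℝ → ℝ} (ha : HasNonposPrimitive a) {c : ℝ} (hc : 0 ≤ c) :
    HasNonposPrimitive fun t => c * a t := by
  obtain ⟨A, hA, hA0⟩ := ha
  exact ⟨fun t => c * A t, fun t => (hA t).const_mul c,
    fun t => mul_nonpos_of_nonneg_of_nonpos hc (hA0 t)⟩

theorem sum {ι : Type*} (s : Finset ι) {a : ι → ℝ → ℝ} (h : ∀ i ∈ s, HasNonposPrimitive (a i)) :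
    HasNonposPrimitive fun t => ∑ i ∈ s, a i t := by
  rw [← Finset.sum_fn]
  exact Finset.sum_induction a HasNonposPrimitive (fun _ _ => add) zero h

theorem exp_neg_mul {s : ℝ} (hs : 0 < s) : HasNonposPrimitive fun t => exp (-s * t) := by
  refine ⟨fun t => -(exp (-s * t) / s), fun t => ?_, fun t => ?_⟩
  · have h : HasDerivAt (fun t => exp (-s * t)) (exp (-s * t) * (-s * 1)) t :=
      ((hasDerivAt_id t).const_mul (-s)).exp
    exact (h.div_const s).fun_neg.congr_deriv (by field_simp)
  · exact neg_nonpos.2 (div_nonneg (exp_pos _).le hs.le)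

/-- Grönwall's inequality, through the integrating factor `exp (-A)`. -/
theorem exists_le_of_hasDerivAt_le_mul {a u u' : ℝ → ℝ} {t₀ : ℝ}
    (ha : HasNonposPrimitive a) (hu : ∀ t ∈ Ici t₀, HasDerivAt u (u' t) t)
    (hle : ∀ t ∈ Ici t₀, u' t ≤ a t * u t) (hu₀ : 0 ≤ u t₀) :
    ∃ M, ∀ t ∈ Ici t₀, u t ≤ M := by
  obtain ⟨A, hA, hA0⟩ := ha
  set g : ℝ → ℝ := fun s => u s * exp (-A s)
  have hg : ∀ t ∈ Ici t₀, HasDerivAt g ((u' t - a t * u t) * exp (-A t)) t := by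
    intro t ht
    exact ((hu t ht).mul (hA t).fun_neg.exp).congr_deriv (by ring)
  have hanti : AntitoneOn g (Ici t₀) := by
    refine antitoneOn_of_hasDerivWithinAt_nonpos (f' := fun t => (u' t - a t * u t) * exp (-A t))
      (convex_Ici t₀)
      (fun t ht => (hg t ht).continuousAt.continuousWithinAt) (fun t ht => ?_) (fun t ht => ?_)
    all_goals replace ht : t ∈ Ici t₀ := Ioi_subset_Ici_self (by rwa [interior_Ici] at ht)
    · exact (hg t ht).hasDerivWithinAt
    · exact mul_nonpos_of_nonpos_of_nonneg (sub_nonpos.2 (hle t ht)) (exp_pos _).le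
  refine ⟨g t₀, fun t ht => ?_⟩
  calc u t = g t * exp (A t) := by
        simp only [g, mul_assoc, ← exp_add, neg_add_cancel, exp_zero, mul_one]
    _ ≤ g t₀ * exp (A t) := mul_le_mul_of_nonneg_right (hanti self_mem_Ici ht ht) (exp_pos _).le
    _ ≤ g t₀ := mul_le_of_le_one_right (mul_nonneg hu₀ (exp_pos _).le) (exp_le_one_iff.2 (hA0 t))

end HasNonposPrimitive

section Consensus

variable {ι : Type*} [Fintype ι] {L : Matrix ι ι ℝ}

theorem sum_mulVec_eq_zero (hL : Lᵀ *ᵥ 1 = 0) (v : ι → ℝ) : ∑ i, (L *ᵥ v) i = 0 := by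
  rw [← one_dotProduct, dotProduct_mulVec, ← mulVec_transpose, hL, zero_dotProduct]

theorem mulVec_add_smul_one (hL : L *ᵥ 1 = 0) (v : ι → ℝ) (c : ℝ) :
    L *ᵥ (v + c • 1) = L *ᵥ v := by
  rw [mulVec_add, mulVec_smul, hL, smul_zero, add_zero]

theorem dotProduct_mulVec_self_nonneg
    (hL : ∀ w : ι → ℝ, w ≠ 0 → ∑ i, w i = 0 → 0 < w ⬝ᵥ (L + Lᵀ) *ᵥ w)
    {w : ι → ℝ} (hw : ∑ i, w i = 0) : 0 ≤ w ⬝ᵥ L *ᵥ w := by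
  rcases eq_or_ne w 0 with rfl | hw0
  · simp
  have h := hL w hw0 hw
  rw [add_mulVec, dotProduct_add, mulVec_transpose, dotProduct_comm w (w ᵥ* L),
    ← dotProduct_mulVec, ← two_mul, mul_pos_iff_of_pos_left two_pos] at h
  exact h.le

theorem dotProduct_self_nonneg (w : ι → ℝ) : 0 ≤ w ⬝ᵥ w :=
  Finset.sum_nonneg fun i _ => mul_self_nonneg (w i)

theorem sq_le_dotProduct_self (w : ι → ℝ) (i : ι) : w i ^ 2 ≤ w ⬝ᵥ w := by
  simpa only [dotProduct, sq] using
    Finset.single_le_sum (fun j _ => mul_self_nonneg (w j)) (Finset.mem_univ i)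

theorem abs_le_one_add_dotProduct_self (w : ι → ℝ) (i : ι) : |w i| ≤ 1 + w ⬝ᵥ w := by
  nlinarith [sq_le_dotProduct_self w i, sq_abs (w i), sq_nonneg (|w i| - 1)]

theorem abs_mul_abs_le_dotProduct_self (w : ι → ℝ) (i j : ι) : |w i| * |w j| ≤ w ⬝ᵥ w := by
  nlinarith [sq_le_dotProduct_self w i, sq_le_dotProduct_self w j, sq_abs (w i), sq_abs (w j),
    sq_nonneg (|w i| - |w j|)]

theorem HasDerivAt.dotProduct_self {w : ℝ → ι → ℝ} {w' : ι → ℝ} {t : ℝ}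
    (h : HasDerivAt w w' t) : HasDerivAt (fun s => w s ⬝ᵥ w s) (2 * (w t ⬝ᵥ w')) t := by
  have hi := fun i => hasDerivAt_pi.1 h i
  refine (HasDerivAt.fun_sum fun i _ => (hi i).mul (hi i)).congr_deriv ?_
  rw [dotProduct, Finset.mul_sum]
  exact Finset.sum_congr rfl fun i _ => by ring

theorem sum_eq_of_hasDerivAt {x x' : ℝ → ι → ℝ} {t₀ : ℝ}
    (hx : ∀ t ∈ Ici t₀, HasDerivAt x (x' t) t) (h : ∀ t ∈ Ici t₀, ∑ i, x' t i = 0)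
    {t : ℝ} (ht : t ∈ Ici t₀) : ∑ i, x t i = ∑ i, x t₀ i := by
  have hsum : ∀ s ∈ Ici t₀, HasDerivAt (fun s => ∑ i, x s i) 0 s := fun s hs =>
    (HasDerivAt.fun_sum fun i _ => hasDerivAt_pi.1 (hx s hs) i).congr_deriv (h s hs)
  exact constant_of_has_deriv_right_zero
    (fun s hs => (hsum s hs.1).continuousAt.continuousWithinAt)
    (fun s hs => (hsum s hs.1).hasDerivWithinAt) t (right_mem_Icc.2 ht)

theorem abs_mask_sub_le (φ σ δ γ t y : ℝ) :
    |(1 + φ * exp (-σ * t)) * (y + exp (-δ * t) * γ) - y|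
      ≤ |φ| * exp (-σ * t) * |y| + (|γ| * exp (-δ * t) + |φ * γ| * exp (-(σ + δ) * t)) := by
  have hexp : exp (-(σ + δ) * t) = exp (-σ * t) * exp (-δ * t) := by
    rw [← exp_add]; ring_nf
  have hsplit : (1 + φ * exp (-σ * t)) * (y + exp (-δ * t) * γ) - y
      = φ * exp (-σ * t) * y + (γ * exp (-δ * t) + φ * γ * exp (-(σ + δ) * t)) := by
    rw [hexp]; ring
  rw [hsplit]
  refine (abs_add_le _ _).trans (add_le_add ?_ ((abs_add_le _ _).trans (add_le_add ?_ ?_))) <;>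
    simp [abs_mul, abs_of_pos (exp_pos _)]

theorem abs_mul_abs_le_of_abs_le {w : ι → ℝ} {η p q μ : ℝ} (hp : 0 ≤ p) (hq : 0 ≤ q) {j : ι}
    (hμ : |μ| ≤ p * |w j + η| + q) (i : ι) :
    |w i| * |μ| ≤ ((1 + |η|) * p + q) * (1 + w ⬝ᵥ w) := by
  have hwi := abs_le_one_add_dotProduct_self w i
  have hwij := abs_mul_abs_le_dotProduct_self w i j
  calc |w i| * |μ| ≤ |w i| * (p * (|w j| + |η|) + q) := by
        gcongr
        exact hμ.trans (by gcongr; exact abs_add_le _ _)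
    _ = p * (|w i| * |w j|) + (p * |η| + q) * |w i| := by ring
    _ ≤ p * (1 + w ⬝ᵥ w) + (p * |η| + q) * (1 + w ⬝ᵥ w) := by gcongr; linarith
    _ = ((1 + |η|) * p + q) * (1 + w ⬝ᵥ w) := by ring

theorem abs_dotProduct_mulVec_le (L : Matrix ι ι ℝ) {w m c : ι → ℝ} {K : ℝ}
    (h : ∀ i j, |w i| * |m j| ≤ c j * K) :
    |w ⬝ᵥ L *ᵥ m| ≤ (∑ i, ∑ j, |L i j| * c j) * K := by
  calc |w ⬝ᵥ L *ᵥ m| = |∑ i, ∑ j, L i j * (w i * m j)| := by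
        simp only [dotProduct, mulVec, Finset.mul_sum]
        congr 1
        exact Finset.sum_congr rfl fun i _ => Finset.sum_congr rfl fun j _ => by ring
    _ ≤ ∑ i, ∑ j, |L i j| * (|w i| * |m j|) := by
        refine (Finset.abs_sum_le_sum_abs _ _).trans
          (Finset.sum_le_sum fun i _ => (Finset.abs_sum_le_sum_abs _ _).trans_eq ?_)
        simp only [abs_mul]
    _ ≤ ∑ i, ∑ j, |L i j| * (c j * K) :=
        Finset.sum_le_sum fun i _ => Finset.sum_le_sum fun j _ =>
          mul_le_mul_of_nonneg_left (h i j) (abs_nonneg _)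
    _ = (∑ i, ∑ j, |L i j| * c j) * K := by simp only [Finset.sum_mul, mul_assoc]

/-- Coefficient `a(t)` of the differential inequality `U' ≤ a(t) U` for the energy
`U = 1 + ‖x - η𝟙‖²`. -/
noncomputable def maskEnvelope (L : Matrix ι ι ℝ) (φ σ δ γ : ι → ℝ) (η t : ℝ) : ℝ :=
  2 * ∑ i, ∑ j, |L i j| * ((1 + |η|) * (|φ j| * exp (-σ j * t))
    + (|γ j| * exp (-δ j * t) + |φ j * γ j| * exp (-(σ j + δ j) * t)))

theorem hasNonposPrimitive_maskEnvelope (L : Matrix ι ι ℝ) (φ γ : ι → ℝ) {σ δ : ι → ℝ}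
    (hσ : ∀ j, 0 < σ j) (hδ : ∀ j, 0 < δ j) (η : ℝ) :
    HasNonposPrimitive (maskEnvelope L φ σ δ γ η) := by
  open HasNonposPrimitive in
  refine (sum _ fun i _ => sum _ fun j _ => (add ?_ (add ?_ ?_)).const_mul (abs_nonneg _)).const_mul
    two_pos.le
  · exact ((exp_neg_mul (hσ j)).const_mul (abs_nonneg _)).const_mul (by positivity)
  · exact (exp_neg_mul (hδ j)).const_mul (abs_nonneg _)
  · exact (exp_neg_mul (add_pos (hσ j) (hδ j))).const_mul (abs_nonneg _)

end Consensus

theorem two_mul_dotProduct_maskedConsensusRHS_le {n : ℕ} {L : Matrix (Fin n) (Fin n) ℝ}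
    (hL1 : L *ᵥ 1 = 0)
    (hLpos : ∀ w : Fin n → ℝ, w ≠ 0 → ∑ i, w i = 0 → 0 < w ⬝ᵥ (L + Lᵀ) *ᵥ w)
    (φ σ δ γ : Fin n → ℝ) {w : Fin n → ℝ} (hw : ∑ i, w i = 0) (η t : ℝ) :
    2 * (w ⬝ᵥ maskedConsensusRHS L φ σ δ γ t (w + η • 1))
      ≤ maskEnvelope L φ σ δ γ η t * (1 + w ⬝ᵥ w) := by
  set m : Fin n → ℝ := fun j =>
    (1 + φ j * exp (-σ j * t)) * (w j + η + exp (-δ j * t) * γ j) - (w j + η)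
  have hrhs : maskedConsensusRHS L φ σ δ γ t (w + η • 1) = -(L *ᵥ w + L *ᵥ m) := by
    rw [maskedConsensusRHS, ← mulVec_add_smul_one hL1 w η, ← mulVec_add]
    congr 2
    ext j
    simp [m]
  have hcross := abs_dotProduct_mulVec_le L fun i j =>
    abs_mul_abs_le_of_abs_le (by positivity) (by positivity)
      (abs_mask_sub_le (φ j) (σ j) (δ j) (γ j) t (w j + η)) i
  rw [hrhs, dotProduct_neg, dotProduct_add, maskEnvelope, mul_assoc]
  nlinarith [dotProduct_mulVec_self_nonneg hLpos hw, neg_abs_le (w ⬝ᵥ L *ᵥ m)]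

theorem sum_maskedConsensusRHS_eq_zero {n : ℕ} {L : Matrix (Fin n) (Fin n) ℝ}
    (hLT1 : Lᵀ *ᵥ 1 = 0) (φ σ δ γ : Fin n → ℝ) (t : ℝ) (y : Fin n → ℝ) :
    ∑ i, maskedConsensusRHS L φ σ δ γ t y i = 0 := by
  simp only [maskedConsensusRHS, Pi.neg_apply, Finset.sum_neg_distrib, sum_mulVec_eq_zero hLT1,
    neg_zero]

theorem masked_consensus_solutions_bounded_general
    (n : ℕ) (L : Matrix (Fin n) (Fin n) ℝ) (φ σ δ γ : Fin n → ℝ)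
    (hL1 : L.mulVec (fun _ => (1 : ℝ)) = 0)
    (hLT1 : L.transpose.mulVec (fun _ => (1 : ℝ)) = 0)
    (hLpos : ∀ w : Fin n → ℝ, w ≠ 0 → (∑ i, w i) = 0 →
      0 < dotProduct w ((L + L.transpose).mulVec w))
    (hσ : ∀ i, 0 < σ i) (hδ : ∀ i, 0 < δ i)
    (t₀ : ℝ) (x : ℝ → Fin n → ℝ)
    (hsol : ∀ t ∈ Set.Ici t₀, HasDerivAt x (maskedConsensusRHS L φ σ δ γ t (x t)) t) :
    ∃ M : ℝ, ∀ t ∈ Set.Ici t₀, ‖x t‖ ≤ M := by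
  set η := (∑ i, x t₀ i) / n
  have hmean : (n : ℝ) * η = ∑ i, x t₀ i := by
    rcases n.eq_zero_or_pos with rfl | hn
    · simp
    · exact mul_div_cancel₀ _ (by positivity)
  set w : ℝ → Fin n → ℝ := fun s => x s - η • 1
  have hw : ∀ t ∈ Ici t₀, ∑ i, w t i = 0 := by
    intro t ht
    have hconst := sum_eq_of_hasDerivAt hsol
      (fun s _ => sum_maskedConsensusRHS_eq_zero hLT1 φ σ δ γ s (x s)) ht
    simp only [w, Pi.sub_apply, Pi.smul_apply, Pi.one_apply, smul_eq_mul, mul_one,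
      Finset.sum_sub_distrib, Finset.sum_const, Finset.card_univ, Fintype.card_fin, nsmul_eq_mul,
      hmean, hconst, sub_self]
  obtain ⟨M, hM⟩ := (hasNonposPrimitive_maskEnvelope L φ γ hσ hδ η).exists_le_of_hasDerivAt_le_mul
    (u := fun s => 1 + w s ⬝ᵥ w s)
    (fun t ht => (((hsol t ht).sub_const (η • 1)).dotProduct_self).const_add 1)
    (fun t ht => by
      simpa [w] using two_mul_dotProduct_maskedConsensusRHS_le hL1 hLpos φ σ δ γ (hw t ht) η t)
    (add_nonneg zero_le_one (dotProduct_self_nonneg _))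
  refine ⟨M + |η|, fun t ht => (pi_norm_le_iff_of_nonneg ?_).2 fun i => ?_⟩
  · exact add_nonneg ((add_nonneg zero_le_one (dotProduct_self_nonneg _)).trans (hM t ht))
      (abs_nonneg η)
  calc ‖x t i‖ = |w t i + η| := by simp [w]
    _ ≤ |w t i| + |η| := abs_add_le _ _
    _ ≤ M + |η| := by gcongr; exact (abs_le_one_add_dotProduct_self (w t) i).trans (hM t ht)

/-- **Boundedness of the trajectories of the masked system (from the proof of
Theorem 1).** Every solution `x : [t₀, ∞) → ℝⁿ` of the masked average-consensus
system `ẋ = -L (I + Φ e^{-Σ t}) (x + e^{-Δ t} γ)` — with `L` an irreducible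
weight-balanced Laplacian (`L𝟙 = Lᵀ𝟙 = 0`, `wᵀ(L+Lᵀ)w > 0` for nonzero `w ⊥ 𝟙`)
and `φᵢ, σᵢ, δᵢ > 0` — is bounded: `‖x(t)‖ ≤ M` for all `t ≥ t₀`, for some `M`. -/
theorem masked_consensus_solutions_bounded
    (n : ℕ) (hn : 2 ≤ n) (L : Matrix (Fin n) (Fin n) ℝ) (φ σ δ γ : Fin n → ℝ)
    (hL1 : L.mulVec (fun _ => (1 : ℝ)) = 0)
    (hLT1 : L.transpose.mulVec (fun _ => (1 : ℝ)) = 0)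
    (hLpos : ∀ w : Fin n → ℝ, w ≠ 0 → (∑ i, w i) = 0 →
      0 < dotProduct w ((L + L.transpose).mulVec w))
    (hφ : ∀ i, 0 < φ i) (hσ : ∀ i, 0 < σ i) (hδ : ∀ i, 0 < δ i)
    (t₀ : ℝ) (ht₀ : 0 ≤ t₀) (x : ℝ → Fin n → ℝ)
    (hsol : ∀ t ∈ Set.Ici t₀, HasDerivAt x (maskedConsensusRHS L φ σ δ γ t (x t)) t) :
    ∃ M : ℝ, ∀ t ∈ Set.Ici t₀, ‖x t‖ ≤ M :=
  masked_consensus_solutions_bounded_general n L φ σ δ γ hL1 hLT1 hLpos hσ hδ t₀ x hsol
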